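/- Let X ⊆ ℝ⁴ be a convex polytope, let y ∈ frontier X, and let L_y = T_y⁺X ∩ (−T_y⁺X) (the direction space of the open face of ∂X containing y). Assume L_y is a 2-dimensional subspace. If there exists w ≠ 0 with w ∈ L_y and −i·w ∈ N_y⁺X, then ω₀ vanishes identically on L_y, i.e. the 2-face of X through y is Lagrangian. (Lemma 3.10 of the paper: if TF ∩ R_F⁺X ≠ {0} for a 2-face F, then F is Lagrangian.) -/

import Mathlib

/-!
For `x ∈ L_y` both `x` and `-x` lie in `T_y⁺X`, so pairing with `-i·w ∈ N_y⁺X` gives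
`⟪x, i·w⟫ = 0`, i.e. `ω₀(w, ·)` vanishes on `L_y`. An alternating form on a plane that is
degenerate along a nonzero vector of the plane vanishes identically.
-/

open RealInnerProductSpace

/-- The standard complex structure on ℝ⁴:
`i(x₁,x₂,y₁,y₂) = (−y₁,−y₂,x₁,x₂)`. -/
def Imap (v : EuclideanSpace ℝ (Fin 4)) : EuclideanSpace ℝ (Fin 4) :=
  WithLp.toLp 2 ![-(v 2), -(v 3), v 0, v 1]

/-- The standard symplectic form on ℝ⁴: `ω₀(u,v) = ⟪i·u, v⟫`. -/
noncomputable def omega0 (u v : EuclideanSpace ℝ (Fin 4)) : ℝ := ⟪Imap u, v⟫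

/-- The tangent cone `T_y⁺X`. -/
def tangentConePlus (X : Set (EuclideanSpace ℝ (Fin 4)))
    (y : EuclideanSpace ℝ (Fin 4)) : Set (EuclideanSpace ℝ (Fin 4)) :=
  closure {v | ∃ ε : ℝ, 0 < ε ∧ y + ε • v ∈ X}

/-- The positive normal cone `N_y⁺X`. -/
def normalConePlus (X : Set (EuclideanSpace ℝ (Fin 4)))
    (y : EuclideanSpace ℝ (Fin 4)) : Set (EuclideanSpace ℝ (Fin 4)) :=
  {v | ∀ x ∈ X, ⟪x - y, v⟫ ≤ 0}

section AlternatingForm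

variable {K M : Type*} [Field K] [AddCommGroup M] [Module K M] {B : M →ₗ[K] M →ₗ[K] K}

theorem LinearMap.IsAlt.apply_eq_zero_of_not_linearIndependent (hB : B.IsAlt) {w u v : M}
    (hw : w ≠ 0) (hdep : ¬ LinearIndependent K ![w, u, v]) (hu : B w u = 0) (hv : B w v = 0) :
    B u v = 0 := by
  obtain ⟨g, hg, i, hgi⟩ := Fintype.not_linearIndependent_iff.mp hdep
  simp only [Fin.sum_univ_three, Matrix.cons_val_zero, Matrix.cons_val_one,
    Matrix.cons_val_two, Matrix.tail_cons, Matrix.head_cons] at hg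
  -- pair the relation `g₀ w + g₁ u + g₂ v = 0` with `v` and with `u`
  have h₁ : g 1 * B u v = 0 := by
    simpa [hv, hB.self_eq_zero] using congrArg (B · v) hg
  have h₂ : g 2 * B u v = 0 := by
    simpa [hu, hB.self_eq_zero, ← hB.neg u v] using congrArg (B · u) hg
  by_contra h
  have hg₁ : g 1 = 0 := (mul_eq_zero.mp h₁).resolve_right h
  have hg₂ : g 2 = 0 := (mul_eq_zero.mp h₂).resolve_right h
  have hg₀ : g 0 = 0 := by
    simpa [hg₁, hg₂, hw] using hg
  fin_cases i <;> simp_all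

theorem LinearMap.IsAlt.apply_eq_zero_of_finrank_le_two (hB : B.IsAlt) {L : Submodule K M}
    [FiniteDimensional K L] (hL : Module.finrank K L ≤ 2) {w : M} (hwL : w ∈ L) (hw : w ≠ 0)
    (hwB : ∀ x ∈ L, B w x = 0) {u v : M} (hu : u ∈ L) (hv : v ∈ L) : B u v = 0 := by
  refine hB.apply_eq_zero_of_not_linearIndependent hw (fun hind => ?_) (hwB u hu) (hwB v hv)
  have hspan : Submodule.span K (Set.range ![w, u, v]) ≤ L := by
    rw [Submodule.span_le, Matrix.range_cons, Matrix.range_cons, Matrix.range_cons]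
    simp [Set.insert_subset_iff, hwL, hu, hv]
  have := Submodule.finrank_mono hspan
  rw [finrank_span_eq_card hind, Fintype.card_fin] at this
  omega

end AlternatingForm

def Imapₗ : EuclideanSpace ℝ (Fin 4) →ₗ[ℝ] EuclideanSpace ℝ (Fin 4) where
  toFun := Imap
  map_add' u v := by
    ext i; fin_cases i <;> simp [Imap] <;> ring
  map_smul' a u := by
    ext i; fin_cases i <;> simp [Imap]

noncomputable def omega0ₗ : EuclideanSpace ℝ (Fin 4) →ₗ[ℝ] EuclideanSpace ℝ (Fin 4) →ₗ[ℝ] ℝ :=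
  (innerₗ _).comp Imapₗ

theorem omega0ₗ_apply (u v : EuclideanSpace ℝ (Fin 4)) : omega0ₗ u v = omega0 u v := rfl

theorem omega0ₗ_isAlt : omega0ₗ.IsAlt := by
  intro u
  simp [omega0ₗ_apply, omega0, Imap, PiLp.inner_apply, Fin.sum_univ_four]
  ring

theorem inner_nonpos_of_mem_tangentConePlus_of_mem_normalConePlus
    {X : Set (EuclideanSpace ℝ (Fin 4))} {y v m : EuclideanSpace ℝ (Fin 4)}
    (hv : v ∈ tangentConePlus X y) (hm : m ∈ normalConePlus X y) : ⟪v, m⟫ ≤ 0 := by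
  refine closure_minimal (t := {v | ⟪v, m⟫ ≤ 0}) ?_
    (isClosed_le (continuous_id.inner continuous_const) continuous_const) hv
  rintro v ⟨ε, hε, hx⟩
  have h := hm _ hx
  rw [add_sub_cancel_left, real_inner_smul_left] at h
  exact nonpos_of_mul_nonpos_right h hε

theorem inner_eq_zero_of_mem_tangentConePlus_inter_neg
    {X : Set (EuclideanSpace ℝ (Fin 4))} {y v m : EuclideanSpace ℝ (Fin 4)}
    (hv : v ∈ tangentConePlus X y ∩ -tangentConePlus X y) (hm : m ∈ normalConePlus X y) :
    ⟪v, m⟫ = 0 := by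
  have h₁ := inner_nonpos_of_mem_tangentConePlus_of_mem_normalConePlus hv.1 hm
  have h₂ := inner_nonpos_of_mem_tangentConePlus_of_mem_normalConePlus hv.2 hm
  rw [inner_neg_left] at h₂
  linarith

theorem lagrangian_of_tangent_reeb_general
    (X : Set (EuclideanSpace ℝ (Fin 4)))
    (y : EuclideanSpace ℝ (Fin 4))
    (L : Submodule ℝ (EuclideanSpace ℝ (Fin 4)))
    (hL : (L : Set (EuclideanSpace ℝ (Fin 4))) =
      tangentConePlus X y ∩ -(tangentConePlus X y))
    (hdim : Module.finrank ℝ L = 2)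
    (w : EuclideanSpace ℝ (Fin 4)) (hw0 : w ≠ 0)
    (hwL : w ∈ L) (hwN : -(Imap w) ∈ normalConePlus X y) :
    ∀ u ∈ L, ∀ v ∈ L, omega0 u v = 0 := by
  have hwω : ∀ x ∈ L, omega0ₗ w x = 0 := fun x hx => by
    have hx' : x ∈ tangentConePlus X y ∩ -tangentConePlus X y := hL ▸ hx
    have h := inner_eq_zero_of_mem_tangentConePlus_inter_neg hx' hwN
    rwa [inner_neg_right, neg_eq_zero, real_inner_comm] at h
  exact fun u hu v hv =>
    omega0ₗ_isAlt.apply_eq_zero_of_finrank_le_two hdim.le hwL hw0 hwω hu hv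

/-- Lemma 3.10: let `X ⊆ ℝ⁴` be a convex polytope, `y ∈ frontier X`, and suppose
`L_y = T_y⁺X ∩ (−T_y⁺X)` is a 2-dimensional subspace.  If some nonzero `w ∈ L_y`
satisfies `−i·w ∈ N_y⁺X`, then `ω₀` vanishes identically on `L_y`, i.e. the
2-face of `X` through `y` is Lagrangian. -/
theorem lagrangian_of_tangent_reeb {N : ℕ}
    (n : Fin N → EuclideanSpace ℝ (Fin 4)) (c : Fin N → ℝ)
    (hn : ∀ i, n i ≠ 0)
    (X : Set (EuclideanSpace ℝ (Fin 4)))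
    (hX : X = ⋂ i, {x | ⟪x, n i⟫ ≤ c i})
    (hcomp : IsCompact X)
    (y : EuclideanSpace ℝ (Fin 4)) (hy : y ∈ frontier X)
    (L : Submodule ℝ (EuclideanSpace ℝ (Fin 4)))
    (hL : (L : Set (EuclideanSpace ℝ (Fin 4))) =
      tangentConePlus X y ∩ -(tangentConePlus X y))
    (hdim : Module.finrank ℝ L = 2)
    (w : EuclideanSpace ℝ (Fin 4)) (hw0 : w ≠ 0)
    (hwL : w ∈ L) (hwN : -(Imap w) ∈ normalConePlus X y) :
    ∀ u ∈ L, ∀ v ∈ L, omega0 u v = 0 :=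
  lagrangian_of_tangent_reeb_general X y L hL hdim w hw0 hwL hwN
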